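/- arXiv:2506.11704 — 2 statements merged into one kernel-verified Lean document; each statement's English description precedes it below -/
import Mathlib

section
/- Let t ≥ 3 be an integer, and for i ∈ {1,2,3} let T_i be the tree obtained from the disjoint union of a type-i star and a type-(1+(i mod 3)) star by adding an edge between their centers. Then the graph obtained from the disjoint union of a type-1 star, a type-2 star and a type-3 star by adding the three edges of a triangle on their three centers is an isometric-universal graph for {T1, T2, T3}, and it has exactly 3(t^3+1) vertices. -/
open SimpleGraph

/-- `φ` realizes `G` as an isometric subgraph of `U`: it maps edges to edges and
preserves all distances, where `edist` takes the value `⊤` between vertices in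
different connected components. -/
def IsIsometricEmbedding {V W : Type} (G : SimpleGraph V) (U : SimpleGraph W)
    (φ : V → W) : Prop :=
  (∀ u v : V, G.Adj u v → U.Adj (φ u) (φ v)) ∧
  ∀ u v : V, G.edist u v = U.edist (φ u) (φ v)

/-- `U` is an isometric-universal graph for the pair `{G₁, G₂}`: both `G₁` and `G₂`
are isomorphic to isometric subgraphs of `U`. -/
def IsIsoUniversalPair {V₁ V₂ W : Type} (G₁ : SimpleGraph V₁) (G₂ : SimpleGraph V₂)
    (U : SimpleGraph W) : Prop :=
  (∃ φ : V₁ → W, IsIsometricEmbedding G₁ U φ) ∧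
  (∃ φ : V₂ → W, IsIsometricEmbedding G₂ U φ)

/-- `U` is an isometric-universal graph for the family `{G₁, G₂, G₃}`. -/
def IsIsoUniversalTriple {V₁ V₂ V₃ W : Type} (G₁ : SimpleGraph V₁) (G₂ : SimpleGraph V₂)
    (G₃ : SimpleGraph V₃) (U : SimpleGraph W) : Prop :=
  (∃ φ : V₁ → W, IsIsometricEmbedding G₁ U φ) ∧
  (∃ φ : V₂ → W, IsIsometricEmbedding G₂ U φ) ∧
  (∃ φ : V₃ → W, IsIsometricEmbedding G₃ U φ)

/-- The subdivided star with `b` branches of length `ℓ`: the star `K_{1,b}` in which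
every edge is replaced by a path of length `ℓ`. The center is the vertex `none`, and
`some (j, r)` is the vertex of branch `j` at distance `r + 1` from the center. -/
def SubdividedStar (b ℓ : ℕ) : SimpleGraph (Option (Fin b × Fin ℓ)) :=
  SimpleGraph.fromRel fun x y =>
    match x, y with
    | none, some (_, r) => (r : ℕ) = 0
    | some (j, r), some (j', r') => j = j' ∧ (r' : ℕ) = (r : ℕ) + 1
    | _, _ => False

/-- The type-`i` star (for the parameter `t`): the star `K_{1,t^i}` in which every edge
is replaced by a path of length `t^(3-i)`. It has `t³ + 1` vertices and its center is
the vertex `none`. -/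
def typeStar (t i : ℕ) : SimpleGraph (Option (Fin (t ^ i) × Fin (t ^ (3 - i)))) :=
  SubdividedStar (t ^ i) (t ^ (3 - i))

/-- The disjoint union of `G` and `H` together with an edge joining `a ∈ V(G)` to
`b ∈ V(H)`. -/
def linkCenters {A B : Type} (G : SimpleGraph A) (H : SimpleGraph B) (a : A) (b : B) :
    SimpleGraph (A ⊕ B) :=
  SimpleGraph.fromRel fun x y =>
    match x, y with
    | Sum.inl u, Sum.inl v => G.Adj u v
    | Sum.inr u, Sum.inr v => H.Adj u v
    | Sum.inl u, Sum.inr v => u = a ∧ v = b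
    | _, _ => False

/-- The tree `T_i` of the paper: the disjoint union of a type-`i` star and a
type-`(1 + (i mod 3))` star with an edge between their centers. -/
def paperTree (t i : ℕ) :
    SimpleGraph (Option (Fin (t ^ i) × Fin (t ^ (3 - i))) ⊕
      Option (Fin (t ^ (1 + i % 3)) × Fin (t ^ (3 - (1 + i % 3))))) :=
  linkCenters (typeStar t i) (typeStar t (1 + i % 3)) none none

/-- The vertex set of the graph made of one star of each type plus a triangle on the
three centers. -/
abbrev TriStarVerts (t : ℕ) : Type :=
  (Option (Fin (t ^ 1) × Fin (t ^ (3 - 1))) ⊕ Option (Fin (t ^ 2) × Fin (t ^ (3 - 2)))) ⊕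
    Option (Fin (t ^ 3) × Fin (t ^ (3 - 3)))

/-- The disjoint union of a type-1, a type-2 and a type-3 star together with the three
edges of a triangle on their centers. -/
def triStar (t : ℕ) : SimpleGraph (TriStarVerts t) :=
  linkCenters (linkCenters (typeStar t 1) (typeStar t 2) none none) (typeStar t 3)
      (Sum.inr none) none ⊔
    SimpleGraph.fromEdgeSet {s(Sum.inl (Sum.inl none), Sum.inr none)}

/-!
Each `T_i` is the pair of stars of types `i` and `i + 1` of the triangle of stars together with
the edge joining their centers, and the rotation of the triangle reduces `T₂` and `T₃` to `T₁`.
This subgraph is isometric because the triangle retracts onto it without increasing distances: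
the third star is bipartite, so colouring its vertices by the parity of their distance to its
center maps it homomorphically onto the edge between the two other centers, with its own center
sent to an endpoint of that edge, to which it is adjacent.
-/

namespace SimpleGraph

variable {V W : Type} {G : SimpleGraph V} {U : SimpleGraph W}

theorem edist_map_le_edist (ψ : W → V) (hψ : ∀ a b, U.Adj a b → G.edist (ψ a) (ψ b) ≤ 1)
    (a b : W) : G.edist (ψ a) (ψ b) ≤ U.edist a b := by
  by_cases h : U.edist a b = ⊤
  · simp [h]
  obtain ⟨p, hp⟩ := exists_walk_of_edist_ne_top h
  rw [← hp]
  clear hp h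
  induction p with
  | nil => simp
  | @cons u x v h p ih =>
    calc G.edist (ψ u) (ψ v) ≤ G.edist (ψ u) (ψ x) + G.edist (ψ x) (ψ v) := G.edist_triangle
      _ ≤ 1 + p.length := add_le_add (hψ u x h) ih
      _ = (p.cons h).length := by rw [Walk.length_cons, Nat.cast_succ, add_comm]

theorem Iso.edist_map {W' : Type} {U' : SimpleGraph W'} (e : U ≃g U') (a b : W) :
    U'.edist (e a) (e b) = U.edist a b := by
  refine le_antisymm
    (edist_map_le_edist e (fun x y h ↦ (edist_eq_one_iff_adj.2 (e.map_adj_iff.2 h)).le) a b) ?_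
  simpa using edist_map_le_edist e.symm
    (fun x y h ↦ (edist_eq_one_iff_adj.2 (e.symm.map_adj_iff.2 h)).le) (e a) (e b)

end SimpleGraph

namespace IsIsometricEmbedding

variable {V W : Type} {G : SimpleGraph V} {U : SimpleGraph W}

theorem of_leftInverse {φ : V → W} (ψ : W → V) (hφ : ∀ u v, G.Adj u v → U.Adj (φ u) (φ v))
    (hψφ : Function.LeftInverse ψ φ) (hψ : ∀ a b, U.Adj a b → G.edist (ψ a) (ψ b) ≤ 1) :
    IsIsometricEmbedding G U φ := by
  refine ⟨hφ, fun u v ↦ le_antisymm ?_ ?_⟩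
  · simpa only [hψφ u, hψφ v] using edist_map_le_edist ψ hψ (φ u) (φ v)
  · exact edist_map_le_edist φ (fun a b h ↦ (edist_eq_one_iff_adj.2 (hφ a b h)).le) u v

theorem comp_iso {W' : Type} {U' : SimpleGraph W'} {φ : V → W} (hφ : IsIsometricEmbedding G U φ)
    (e : U ≃g U') : IsIsometricEmbedding G U' (e ∘ φ) :=
  ⟨fun u v h ↦ e.map_adj_iff.2 (hφ.1 u v h), fun u v ↦ (hφ.2 u v).trans (e.edist_map _ _).symm⟩

end IsIsometricEmbedding

section linkCenters

variable {A B C : Type} (GA : SimpleGraph A) (GB : SimpleGraph B) (GC : SimpleGraph C)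
  (a : A) (b : B) (c : C)

@[simp] theorem linkCenters_adj_inl_inl (u v : A) :
    (linkCenters GA GB a b).Adj (.inl u) (.inl v) ↔ GA.Adj u v := by
  simp only [linkCenters, fromRel_adj, ne_eq, Sum.inl.injEq, GA.adj_comm v u, or_self,
    and_iff_right_iff_imp]
  exact GA.ne_of_adj

@[simp] theorem linkCenters_adj_inr_inr (u v : B) :
    (linkCenters GA GB a b).Adj (.inr u) (.inr v) ↔ GB.Adj u v := by
  simp only [linkCenters, fromRel_adj, ne_eq, Sum.inr.injEq, GB.adj_comm v u, or_self,
    and_iff_right_iff_imp]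
  exact GB.ne_of_adj

@[simp] theorem linkCenters_adj_inl_inr (u : A) (v : B) :
    (linkCenters GA GB a b).Adj (.inl u) (.inr v) ↔ u = a ∧ v = b := by
  simp [linkCenters]

@[simp] theorem linkCenters_adj_inr_inl (u : B) (v : A) :
    (linkCenters GA GB a b).Adj (.inr u) (.inl v) ↔ v = a ∧ u = b := by
  simp [linkCenters]

-- `triStar t` is `triangleLink (typeStar t 1) (typeStar t 2) (typeStar t 3) none none none`
-- by definition.
def triangleLink : SimpleGraph ((A ⊕ B) ⊕ C) :=
  linkCenters (linkCenters GA GB a b) GC (.inr b) c ⊔ fromEdgeSet {s(.inl (.inl a), .inr c)}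

def triangleLink.rotate :
    triangleLink GA GB GC a b c ≃g triangleLink GB GC GA b c a where
  toEquiv := (Equiv.sumAssoc A B C).trans (Equiv.sumComm A (B ⊕ C))
  map_rel_iff' {x y} := by
    rcases x with (x | x) | x <;> rcases y with (y | y) | y <;>
      simp [triangleLink, and_comm, or_comm]

end linkCenters

variable {A B C : Type} {GA : SimpleGraph A} {GB : SimpleGraph B} {GC : SimpleGraph C}
  {a : A} {b : B} {c : C}

theorem isIsometricEmbedding_inl_triangleLink (f : GC →g linkCenters GA GB a b)
    (hf : f c = .inl a) :
    IsIsometricEmbedding (linkCenters GA GB a b) (triangleLink GA GB GC a b c) Sum.inl := by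
  refine .of_leftInverse (Sum.elim id f) (fun u v h ↦ by simpa [triangleLink] using h)
    (fun _ ↦ rfl) fun x y h ↦ edist_le_one_iff_adj_or_eq.2 ?_
  rcases x with x | x <;> rcases y with y | y <;> simp [triangleLink] at h
  · exact .inl h
  · rcases h with (⟨rfl, rfl⟩ | ⟨rfl, rfl⟩) <;> simp [hf]
  · rcases h with (⟨rfl, rfl⟩ | ⟨rfl, rfl⟩) <;> simp [hf]
  · exact .inl (f.map_adj h)

namespace SubdividedStar

variable {b ℓ : ℕ} {V : Type} {G : SimpleGraph V}

@[simp] theorem not_adj_none_none : ¬(SubdividedStar b ℓ).Adj none none := by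
  simp [SubdividedStar]

@[simp] theorem adj_none_some (p : Fin b × Fin ℓ) :
    (SubdividedStar b ℓ).Adj none (some p) ↔ (p.2 : ℕ) = 0 := by
  simp [SubdividedStar]

@[simp] theorem adj_some_none (p : Fin b × Fin ℓ) :
    (SubdividedStar b ℓ).Adj (some p) none ↔ (p.2 : ℕ) = 0 := by
  rw [adj_comm, adj_none_some]

theorem adj_some_some {j j' : Fin b} {r r' : Fin ℓ} :
    (SubdividedStar b ℓ).Adj (some (j, r)) (some (j', r')) ↔
      j = j' ∧ ((r' : ℕ) = r + 1 ∨ (r : ℕ) = r' + 1) := by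
  simp only [SubdividedStar, fromRel_adj, ne_eq, Option.some.injEq, Prod.mk.injEq]
  constructor
  · rintro ⟨-, ⟨rfl, h⟩ | ⟨rfl, h⟩⟩ <;> simp [h]
  · rintro ⟨rfl, h | h⟩ <;> refine ⟨fun ⟨_, hr⟩ ↦ by omega, by simp [h]⟩

def fold {x y : V} (hxy : G.Adj x y) : SubdividedStar b ℓ →g G where
  toFun
    | none => x
    | some (_, r) => if Even (r : ℕ) then y else x
  map_rel' {p q} h := by
    rcases p with _ | ⟨j, r⟩ <;> rcases q with _ | ⟨j', r'⟩
    · exact absurd h not_adj_none_none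
    · simp_all
    · have hr : (r : ℕ) = 0 := (adj_some_none (j, r)).1 h
      simpa [hr] using hxy.symm
    · obtain ⟨-, h | h⟩ := adj_some_some.1 h <;>
        simp only [h, Nat.even_add_one] <;> split_ifs <;> first | exact hxy | exact hxy.symm

end SubdividedStar

theorem isIsometricEmbedding_inl_triangleLink_typeStar (t i j k : ℕ) :
    IsIsometricEmbedding (linkCenters (typeStar t i) (typeStar t j) none none)
      (triangleLink (typeStar t i) (typeStar t j) (typeStar t k) none none none) Sum.inl :=
  isIsometricEmbedding_inl_triangleLink
    (SubdividedStar.fold ((linkCenters_adj_inl_inr _ _ _ _ _ _).2 ⟨rfl, rfl⟩)) rfl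

theorem stmt_8_general (t : ℕ) :
    IsIsoUniversalTriple (paperTree t 1) (paperTree t 2) (paperTree t 3) (triStar t) ∧
    Nat.card (TriStarVerts t) = 3 * (t ^ 3 + 1) := by
  refine ⟨⟨?_, ?_, ?_⟩, ?_⟩
  · exact ⟨_, isIsometricEmbedding_inl_triangleLink_typeStar t 1 2 3⟩
  · exact ⟨_, (isIsometricEmbedding_inl_triangleLink_typeStar t 2 3 1).comp_iso
      (triangleLink.rotate _ _ _ _ _ _).symm⟩
  · exact ⟨_, (isIsometricEmbedding_inl_triangleLink_typeStar t 3 1 2).comp_iso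
      (triangleLink.rotate _ _ _ _ _ _)⟩
  · simp only [Nat.card_eq_fintype_card, Fintype.card_sum, Fintype.card_option,
      Fintype.card_prod, Fintype.card_fin]
    ring

/-- For `t ≥ 3`, the graph made of one star of each type together with
a triangle on their three centers is an isometric-universal graph for `{T₁, T₂, T₃}`,
and it has exactly `3(t³ + 1)` vertices. -/
theorem stmt_8 (t : ℕ) (ht : 3 ≤ t) :
    IsIsoUniversalTriple (paperTree t 1) (paperTree t 2) (paperTree t 3) (triStar t) ∧
    Nat.card (TriStarVerts t) = 3 * (t ^ 3 + 1) :=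
  stmt_8_general t
end

section
/- For every integer n ≥ 8 there exists a pair of trees, each with at most n vertices, such that, with k = ⌊(n−8)/3⌋, every minimum k-isometric-universal graph for this pair is not a tree. -/
/-!
The two trees are the path `P` on `3k + 4` vertices and the spider `S` with three legs of
`k + 1` vertices. Both are `k`-isometric subgraphs of the tadpole formed by a cycle of length
`3k + 3` with a pendant path of `k + 1` vertices, which has only `4k + 4` vertices: two vertices
of `P` or `S` at distance at most `k` in the tadpole are never joined by a short walk around the
cycle. A tree containing `P` and `S`, on the other hand, needs `4k + 5` vertices: in a tree every
injective homomorphism of a connected graph is isometric, so if each leg of `S` met `P`, three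
vertices on different legs of `S` would lie on the path `P`, and one of them would lie between
the other two, which no vertex of `S` does. Hence some leg of `S` is disjoint from `P`.
-/

open SimpleGraph

/-- `φ` realizes `G` as a `k`-isometric subgraph of `U`: it is injective, maps edges to
edges, and preserves every distance whose value in `U` is at most `k` (distances take
the value `⊤` between vertices in different connected components). -/
def IsKIsometricEmbedding (k : ℕ) {V W : Type} (G : SimpleGraph V) (U : SimpleGraph W)
    (φ : V → W) : Prop :=
  Function.Injective φ ∧
  (∀ u v : V, G.Adj u v → U.Adj (φ u) (φ v)) ∧
  ∀ u v : V, U.edist (φ u) (φ v) ≤ (k : ℕ∞) → G.edist u v = U.edist (φ u) (φ v)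

/-- `U` is a `k`-isometric-universal graph for the pair `{G₁, G₂}`: both `G₁` and `G₂`
are isomorphic to `k`-isometric subgraphs of `U`. -/
def IsKIsoUniversalPair (k : ℕ) {V₁ V₂ W : Type} (G₁ : SimpleGraph V₁)
    (G₂ : SimpleGraph V₂) (U : SimpleGraph W) : Prop :=
  (∃ φ : V₁ → W, IsKIsometricEmbedding k G₁ U φ) ∧
  (∃ φ : V₂ → W, IsKIsometricEmbedding k G₂ U φ)

namespace SimpleGraph

variable {V W : Type} {G : SimpleGraph V}

lemma Hom.edist_le {H : SimpleGraph W} (f : G →g H) (u v : V) :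
    H.edist (f u) (f v) ≤ G.edist u v := by
  by_cases h : G.Reachable u v
  · obtain ⟨p, hp⟩ := h.exists_walk_length_eq_edist
    rw [← hp, ← p.length_map f]
    exact (p.map f).edist_le
  · simp [edist_eq_top_of_not_reachable h]

lemma le_edist_of_le_add_one (D : V → V → ℕ) (hD : ∀ v, D v v = 0)
    (hlip : ∀ u u' v, G.Adj u u' → D u v ≤ D u' v + 1) (u v : V) :
    (D u v : ℕ∞) ≤ G.edist u v := by
  by_cases h : G.Reachable u v
  · obtain ⟨p, hp⟩ := h.exists_walk_length_eq_edist
    rw [← hp, Nat.cast_le]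
    clear hp h
    induction p with
    | nil => simp [hD]
    | cons hadj p ih => exact (hlip _ _ _ hadj).trans (by simpa using ih)
  · simp [edist_eq_top_of_not_reachable h]

lemma edist_eq_of_exists_adj_lt (D : V → V → ℕ) (hD : ∀ v, D v v = 0)
    (hlip : ∀ u u' v, G.Adj u u' → D u v ≤ D u' v + 1)
    (hstep : ∀ u v, u ≠ v → ∃ u', G.Adj u u' ∧ D u' v < D u v) (u v : V) :
    G.edist u v = D u v := by
  refine le_antisymm ?_ (le_edist_of_le_add_one D hD hlip u v)
  induction hn : D u v using Nat.strong_induction_on generalizing u with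
  | _ n ih =>
    obtain rfl | huv := eq_or_ne u v
    · simp
    obtain ⟨u', hadj, hlt⟩ := hstep u v huv
    calc G.edist u v ≤ G.edist u u' + G.edist u' v := G.edist_triangle
      _ ≤ 1 + D u' v := add_le_add (edist_eq_one_iff_adj.2 hadj).le (ih _ (hn ▸ hlt) u' rfl)
      _ ≤ n := by norm_cast; omega

/-- On a cycle, a vertex of maximal height has two distinct lower neighbours. -/
lemma isAcyclic_of_height (h : V → ℕ) (hne : ∀ u v, G.Adj u v → h u ≠ h v)
    (huniq : ∀ u v w, G.Adj u v → G.Adj u w → h v < h u → h w < h u → v = w) :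
    G.IsAcyclic := by
  classical
  intro v c hc
  obtain ⟨m, hm, hmax⟩ := c.support.toFinset.exists_max_image h ⟨v, by simp⟩
  rw [List.mem_toFinset] at hm
  set c' := c.rotate m hm
  have hc' : c'.IsCycle := hc.rotate hm
  have hlow : ∀ i, G.Adj m (c'.getVert i) → h (c'.getVert i) < h m := fun i hadj =>
    (hmax _ (List.mem_toFinset.2 ((c.mem_support_rotate_iff m hm).1
      (c'.getVert_mem_support i)))).lt_of_ne (hne _ _ hadj).symm
  have hsnd := c'.adj_snd hc'.not_nil
  have hpen := (c'.adj_penultimate hc'.not_nil).symm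
  exact hc'.snd_ne_penultimate (huniq _ _ _ hsnd hpen (hlow _ hsnd) (hlow _ hpen))

lemma IsTree.edist_map_of_injective {T : SimpleGraph W} (hT : T.IsTree) (hG : G.Preconnected)
    (f : G →g T) (hf : Function.Injective f) (u v : V) :
    T.edist (f u) (f v) = G.edist u v := by
  obtain ⟨p, hp, hlen⟩ := (hG u v).exists_path_of_dist
  obtain ⟨q, hq, hqlen⟩ := (hT.connected (f u) (f v)).exists_path_of_dist
  have hpq : (⟨p.map f, hp.map hf⟩ : T.Path _ _) = ⟨q, hq⟩ :=
    (hT.isAcyclic.subsingleton_path _ _).elim _ _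
  rw [← (hG u v).coe_dist_eq_edist, ← (hT.connected (f u) (f v)).coe_dist_eq_edist,
    ← hlen, ← hqlen, ← p.length_map f, show p.map f = q from congrArg Subtype.val hpq]

lemma pathGraph_edist (n : ℕ) (u v : Fin n) : (pathGraph n).edist u v = Nat.dist u v := by
  refine edist_eq_of_exists_adj_lt (G := pathGraph n) (fun u v => Nat.dist u v)
    (fun _ => Nat.dist_self _)
    (fun u u' v h => by rw [pathGraph_adj] at h; unfold Nat.dist; omega) (fun u v huv => ?_) u v
  rcases lt_or_gt_of_ne (Fin.val_ne_iff.2 huv) with h | h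
  · exact ⟨⟨u + 1, by omega⟩, by simp [pathGraph_adj],
      by unfold Nat.dist; dsimp only; omega⟩
  · exact ⟨⟨u - 1, by omega⟩, by rw [pathGraph_adj]; dsimp only; omega,
      by unfold Nat.dist; dsimp only; omega⟩

lemma pathGraph_isTree (n : ℕ) : (pathGraph (n + 1)).IsTree :=
  ⟨pathGraph_connected n, isAcyclic_of_height Fin.val
    (fun u v h => by rw [pathGraph_adj] at h; omega)
    (fun u v w hv hw hvu hwu => by rw [pathGraph_adj] at hv hw; ext; omega)⟩

/-! The spider with legs indexed by `ι`, each with `L` vertices: `none` is the centre and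
`some (i, j)` is the vertex at depth `j + 1` on leg `i`. -/

namespace Spider

variable {ι : Type} {L : ℕ}

def depth : Option (ι × Fin L) → ℕ
  | none => 0
  | some (_, j) => j + 1

def SameLeg (u v : Option (ι × Fin L)) : Prop := ∀ a ∈ u, ∀ b ∈ v, a.1 = b.1

lemma SameLeg.symm {u v : Option (ι × Fin L)} (h : SameLeg u v) : SameLeg v u :=
  fun a ha b hb => (h b hb a ha).symm

@[simp]
lemma sameLeg_none_left (v : Option (ι × Fin L)) : SameLeg none v := fun _ h => by cases h

@[simp]
lemma sameLeg_none_right (u : Option (ι × Fin L)) : SameLeg u none := fun _ _ _ h => by cases h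

@[simp]
lemma sameLeg_some_some_iff {i i' : ι} {j j' : Fin L} :
    SameLeg (some (i, j)) (some (i', j')) ↔ i = i' := by
  simp [SameLeg]

open Classical in
noncomputable def dist (u v : Option (ι × Fin L)) : ℕ :=
  if SameLeg u v then Nat.dist (depth u) (depth v) else depth u + depth v

lemma dist_comm (u v : Option (ι × Fin L)) : dist u v = dist v u := by
  unfold dist
  by_cases h : SameLeg u v
  · rw [if_pos h, if_pos h.symm, Nat.dist_comm]
  · rw [if_neg h, if_neg (mt SameLeg.symm h), add_comm]

lemma dist_none_left (v : Option (ι × Fin L)) : dist none v = depth v := by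
  simp [dist, depth, Nat.dist]

lemma dist_none_right (u : Option (ι × Fin L)) : dist u none = depth u := by
  rw [dist_comm, dist_none_left]

lemma dist_some_some_same (i : ι) (j j' : Fin L) :
    dist (some (i, j)) (some (i, j')) = Nat.dist j j' := by
  simp [dist, depth, Nat.dist]

lemma dist_some_some_of_ne {i i' : ι} (h : i ≠ i') (j j' : Fin L) :
    dist (some (i, j)) (some (i', j')) = j + j' + 2 := by
  rw [dist, if_neg (by simpa using h), depth, depth]
  omega

lemma dist_self (u : Option (ι × Fin L)) : dist u u = 0 := by
  rcases u with _ | ⟨i, j⟩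
  · simp [dist_none_left, depth]
  · simp [dist_some_some_same]

lemma natDist_depth_le_dist (u v : Option (ι × Fin L)) :
    Nat.dist (depth u) (depth v) ≤ dist u v := by
  unfold dist Nat.dist; split_ifs <;> omega

lemma dist_triangle (u v w : Option (ι × Fin L)) : dist u w ≤ dist u v + dist v w := by
  have huv := natDist_depth_le_dist u v
  have hvw := natDist_depth_le_dist v w
  by_cases huw : SameLeg u w
  · rw [dist, if_pos huw]; unfold Nat.dist at *; omega
  rw [dist, if_neg huw]
  by_cases hv : v = none
  · subst hv; rw [dist_none_left, dist_none_right]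
  have : ¬ SameLeg u v ∨ ¬ SameLeg v w := by
    obtain ⟨c, rfl⟩ := Option.ne_none_iff_exists'.1 hv
    exact not_and_or.1 fun ⟨h₁, h₂⟩ => huw fun a ha b hb =>
      (h₁ a ha c rfl).trans (h₂ c rfl b hb)
  rcases this with h | h
  · have : dist u v = depth u + depth v := if_neg h
    unfold Nat.dist at *; omega
  · have : dist v w = depth v + depth w := if_neg h
    unfold Nat.dist at *; omega

end Spider

open Spider in
def spider (ι : Type) (L : ℕ) : SimpleGraph (Option (ι × Fin L)) where
  Adj u v := SameLeg u v ∧ (depth u + 1 = depth v ∨ depth v + 1 = depth u)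
  symm := ⟨fun _ _ h => ⟨h.1.symm, h.2.symm⟩⟩
  loopless := ⟨fun _ h => by omega⟩

namespace Spider

variable {ι : Type} {L : ℕ}

lemma dist_le_dist_add_one_of_adj {u u' : Option (ι × Fin L)} (h : (spider ι L).Adj u u')
    (v : Option (ι × Fin L)) : dist u v ≤ dist u' v + 1 := by
  obtain ⟨hleg, hdepth⟩ := h
  have h1 : dist u u' = 1 := by rw [dist, if_pos hleg]; unfold Nat.dist; omega
  have := dist_triangle u u' v
  omega

lemma exists_adj_dist_lt {u v : Option (ι × Fin L)} (huv : u ≠ v) :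
    ∃ u', (spider ι L).Adj u u' ∧ dist u' v < dist u v := by
  rcases u with _ | ⟨i, j⟩
  · obtain ⟨⟨i', j'⟩, rfl⟩ := Option.ne_none_iff_exists'.1 huv.symm
    refine ⟨some (i', ⟨0, j'.pos⟩), ⟨sameLeg_none_left _, by simp [depth]⟩, ?_⟩
    rw [dist_none_left, dist_some_some_same]
    simp [depth, Nat.dist]
  by_cases hdeep : ∃ j' : Fin L, v = some (i, j') ∧ (j : ℕ) < j'
  · obtain ⟨j', rfl, hlt⟩ := hdeep
    refine ⟨some (i, ⟨j + 1, by have := j'.isLt; omega⟩),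
      ⟨sameLeg_some_some_iff.2 rfl, by simp [depth]⟩, ?_⟩
    rw [dist_some_some_same, dist_some_some_same]
    simp only [Nat.dist]; omega
  push Not at hdeep
  obtain ⟨_ | j, hj⟩ := j <;> dsimp only at hdeep
  · refine ⟨none, ⟨sameLeg_none_right _, by simp [depth]⟩, ?_⟩
    rw [dist_none_left]
    rcases v with _ | ⟨i', j'⟩
    · simp [dist_none_right, depth]
    by_cases hi : i = i'
    · subst hi
      have : j' = ⟨0, hj⟩ := Fin.ext (Nat.le_zero.1 (hdeep j' rfl))
      exact absurd (by rw [this]) huv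
    · simp [dist_some_some_of_ne hi, depth]
  · refine ⟨some (i, ⟨j, by omega⟩),
      ⟨sameLeg_some_some_iff.2 rfl, by simp [depth]⟩, ?_⟩
    rcases v with _ | ⟨i', j'⟩
    · simp [dist_none_right, depth]
    by_cases hi : i = i'
    · subst hi
      have h1 := hdeep j' rfl
      have h2 : (j' : ℕ) ≠ j + 1 := fun h =>
        huv (by rw [show j' = ⟨j + 1, hj⟩ from Fin.ext h])
      simp only [dist_some_some_same, Nat.dist]
      omega
    · simp [dist_some_some_of_ne hi]

end Spider

variable {ι : Type} {L : ℕ}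

lemma spider_edist (u v : Option (ι × Fin L)) : (spider ι L).edist u v = Spider.dist u v :=
  edist_eq_of_exists_adj_lt Spider.dist Spider.dist_self
    (fun _ _ v h => Spider.dist_le_dist_add_one_of_adj h v)
    (fun _ _ => Spider.exists_adj_dist_lt) u v

lemma spider_connected : (spider ι L).Connected :=
  ⟨fun u v => reachable_of_edist_ne_top (by simp [spider_edist])⟩

lemma spider_isAcyclic : (spider ι L).IsAcyclic := by
  refine isAcyclic_of_height Spider.depth (fun u v h => by have := h.2; omega) ?_
  rintro u v w ⟨hv, hv'⟩ ⟨hw, hw'⟩ hvu hwu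
  rcases v with _ | a <;> rcases w with _ | b
  · rfl
  · simp only [Spider.depth] at hv' hw' hvu hwu; omega
  · simp only [Spider.depth] at hv' hw' hvu hwu; omega
  obtain ⟨c, rfl⟩ : ∃ c, u = some c :=
    Option.ne_none_iff_exists'.1 (by rintro rfl; simp [Spider.depth] at hvu)
  simp only [Spider.depth] at hv' hw' hvu hwu
  exact congrArg some (Prod.ext ((hv c rfl a rfl).symm.trans (hw c rfl b rfl)) (Fin.ext (by omega)))

lemma spider_isTree : (spider ι L).IsTree := ⟨spider_connected, spider_isAcyclic⟩

/-- The pendant path is `0 - 1 - ⋯ - a`, continued by the cycle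
`a - (a + 1) - ⋯ - (a + c - 1) - a` of length `c`. -/
def tadpole (a c : ℕ) : SimpleGraph (Fin (a + c)) :=
  pathGraph (a + c) ⊔ fromRel fun x y => x.val = a ∧ y.val = a + c - 1

/-- Unless both vertices lie on the pendant path: walk from each vertex to the cycle (`a - x`
steps, which truncates to `0` on the cycle), then the shorter way around it. -/
def tadpoleDist (a c x y : ℕ) : ℕ :=
  if x < a ∧ y < a then Nat.dist x y
  else a - x + (a - y) + min (Nat.dist (max x a) (max y a)) (c - Nat.dist (max x a) (max y a))

lemma tadpoleDist_le_edist (a c : ℕ) (x y : Fin (a + c)) :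
    (tadpoleDist a c x y : ℕ∞) ≤ (tadpole a c).edist x y := by
  refine le_edist_of_le_add_one (fun x y : Fin (a + c) => tadpoleDist a c x y)
    (fun x => by unfold tadpoleDist Nat.dist; split_ifs <;> omega) (fun x x' y h => ?_) x y
  simp only [tadpole, sup_adj, pathGraph_adj, fromRel_adj] at h
  have := x.isLt; have := x'.isLt; have := y.isLt
  unfold tadpoleDist Nat.dist
  split_ifs <;> omega

/-- The centre goes to the junction `k + 1`; leg `0` runs down the pendant path and legs `1`
and `2` go around the cycle in opposite directions. -/
def spiderToTadpole (k : ℕ) : Option (Fin 3 × Fin (k + 1)) → Fin (k + 1 + (3 * k + 3))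
  | none => ⟨k + 1, by omega⟩
  | some (⟨0, _⟩, j) => ⟨k - j, by omega⟩
  | some (⟨1, _⟩, j) => ⟨k + 2 + j, by omega⟩
  | some (⟨_ + 2, _⟩, j) => ⟨4 * k + 3 - j, by omega⟩

lemma spiderToTadpole_injective (k : ℕ) : Function.Injective (spiderToTadpole k) := by
  rintro (_ | ⟨i, j⟩) (_ | ⟨i', j'⟩) h <;> (try fin_cases i) <;> (try fin_cases i') <;>
    simp [spiderToTadpole, Fin.ext_iff] at h ⊢ <;> omega

lemma spiderToTadpole_adj (k : ℕ) {u v : Option (Fin 3 × Fin (k + 1))}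
    (h : (spider (Fin 3) (k + 1)).Adj u v) :
    (tadpole (k + 1) (3 * k + 3)).Adj (spiderToTadpole k u) (spiderToTadpole k v) := by
  obtain ⟨hleg, hdepth⟩ := h
  rcases u with _ | ⟨i, j⟩ <;> rcases v with _ | ⟨i', j'⟩ <;> (try fin_cases i) <;>
    (try fin_cases i') <;> simp only [Spider.depth] at hdepth <;> simp at hleg <;>
    simp only [spiderToTadpole, tadpole, sup_adj, pathGraph_adj, fromRel_adj, ne_eq, Fin.ext_iff,
      true_and] <;>
    omega

lemma min_spiderDist_le_tadpoleDist (k : ℕ) (u v : Option (Fin 3 × Fin (k + 1))) :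
    min (Spider.dist u v) (k + 1) ≤
      tadpoleDist (k + 1) (3 * k + 3) (spiderToTadpole k u) (spiderToTadpole k v) := by
  rcases u with _ | ⟨i, j⟩ <;> rcases v with _ | ⟨i', j'⟩ <;> (try fin_cases i) <;>
    (try fin_cases i') <;>
    simp [spiderToTadpole, Spider.dist_none_left, Spider.dist_none_right,
      Spider.dist_some_some_same, Spider.dist_some_some_of_ne, Spider.depth] <;>
    unfold tadpoleDist Nat.dist <;> split_ifs <;> omega

end SimpleGraph

lemma isKIsometricEmbedding_of_min_le {V W : Type} {G : SimpleGraph V} {U : SimpleGraph W}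
    (k : ℕ) (φ : V → W) (hφ : Function.Injective φ)
    (hadj : ∀ u v, G.Adj u v → U.Adj (φ u) (φ v))
    (h : ∀ u v, min (G.edist u v) ((k + 1 : ℕ) : ℕ∞) ≤ U.edist (φ u) (φ v)) :
    IsKIsometricEmbedding k G U φ := by
  refine ⟨hφ, hadj, fun u v hk => le_antisymm ?_ (Hom.edist_le ⟨φ, hadj _ _⟩ u v)⟩
  refine (min_le_iff.1 (h u v)).resolve_right fun hk' => ?_
  exact absurd (hk'.trans hk) (by norm_cast; omega)

lemma pathGraph_isKIsometricEmbedding_tadpole (k : ℕ) :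
    IsKIsometricEmbedding k (pathGraph (3 * k + 4)) (tadpole (k + 1) (3 * k + 3))
      (Fin.castLE (by omega)) := by
  refine isKIsometricEmbedding_of_min_le k _ (Fin.castLE_injective _)
    (fun u v h => Or.inl (by simpa [pathGraph_adj] using h)) fun u v => ?_
  rw [pathGraph_edist]
  refine le_trans ?_ (tadpoleDist_le_edist _ _ _ _)
  rw [← Nat.mono_cast.map_min, Nat.cast_le, Fin.val_castLE, Fin.val_castLE]
  have := u.isLt; have := v.isLt
  unfold tadpoleDist Nat.dist; split_ifs <;> omega

lemma spider_isKIsometricEmbedding_tadpole (k : ℕ) :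
    IsKIsometricEmbedding k (spider (Fin 3) (k + 1)) (tadpole (k + 1) (3 * k + 3))
      (spiderToTadpole k) :=
  isKIsometricEmbedding_of_min_le k _ (spiderToTadpole_injective k)
    (fun _ _ => spiderToTadpole_adj k) fun u v => by
      rw [spider_edist, ← Nat.mono_cast.map_min]
      exact (Nat.cast_le.2 (min_spiderDist_le_tadpoleDist k u v)).trans
        (tadpoleDist_le_edist _ _ _ _)

lemma tadpole_isKIsoUniversalPair (k : ℕ) :
    IsKIsoUniversalPair k (pathGraph (3 * k + 4)) (spider (Fin 3) (k + 1))
      (tadpole (k + 1) (3 * k + 3)) :=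
  ⟨⟨_, pathGraph_isKIsometricEmbedding_tadpole k⟩,
    ⟨_, spider_isKIsometricEmbedding_tadpole k⟩⟩

lemma add_le_card_of_isTree {X : Type} [Finite X] {T : SimpleGraph X} (hT : T.IsTree) {N L : ℕ}
    (ψ : Fin N → X) (hψ : Function.Injective ψ)
    (hψT : ∀ u v, (pathGraph N).Adj u v → T.Adj (ψ u) (ψ v))
    (φ : Option (Fin 3 × Fin L) → X) (hφ : Function.Injective φ)
    (hφT : ∀ u v, (spider (Fin 3) L).Adj u v → T.Adj (φ u) (φ v)) :
    N + L ≤ Nat.card X := by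
  by_cases hleg : ∃ i : Fin 3, ∀ j, φ (some (i, j)) ∉ Set.range ψ
  · obtain ⟨i, hi⟩ := hleg
    have hinj : Function.Injective (Sum.elim ψ fun j => φ (some (i, j))) :=
      hψ.sumElim (fun j j' h => by simpa using hφ h) fun p j h => hi j ⟨p, h⟩
    simpa [Nat.card_sum] using Nat.card_le_card_of_injective _ hinj
  push Not at hleg
  choose j p hp using hleg
  have hdist : ∀ i i', i ≠ i' → Nat.dist (p i) (p i') = j i + j i' + 2 := by
    intro i i' hne
    have h1 := hT.edist_map_of_injective (pathGraph_preconnected N) ⟨ψ, hψT _ _⟩ hψ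
      (p i) (p i')
    have h2 := hT.edist_map_of_injective spider_connected.preconnected ⟨φ, hφT _ _⟩ hφ
      (some (i, j i)) (some (i', j i'))
    rw [pathGraph_edist] at h1
    rw [spider_edist, Spider.dist_some_some_of_ne hne] at h2
    simp only [RelHom.coeFn_mk, hp] at h1 h2
    exact_mod_cast h1.symm.trans h2
  have h01 := hdist 0 1 (by decide)
  have h02 := hdist 0 2 (by decide)
  have h12 := hdist 1 2 (by decide)
  unfold Nat.dist at h01 h02 h12
  omega

/-- For every `n ≥ 8` there is a pair of trees, each with at most `n`
vertices, such that for `k = ⌊(n-8)/3⌋` every minimum `k`-isometric-universal graph for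
this pair is not a tree. -/
theorem stmt_11 (n : ℕ) (hn : 8 ≤ n) :
    ∃ (V₁ V₂ : Type) (_ : Fintype V₁) (_ : Fintype V₂)
      (T₁ : SimpleGraph V₁) (T₂ : SimpleGraph V₂),
      T₁.IsTree ∧ T₂.IsTree ∧ Nat.card V₁ ≤ n ∧ Nat.card V₂ ≤ n ∧
      ∀ (X : Type) (_ : Finite X) (U : SimpleGraph X),
        IsKIsoUniversalPair ((n - 8) / 3) T₁ T₂ U →
        (∀ (Y : Type) (_ : Finite Y) (U' : SimpleGraph Y),
          IsKIsoUniversalPair ((n - 8) / 3) T₁ T₂ U' → Nat.card X ≤ Nat.card Y) →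
        ¬ U.IsTree := by
  set k := (n - 8) / 3
  have hk : 3 * k + 4 ≤ n := by omega
  refine ⟨_, _, inferInstance, inferInstance, pathGraph (3 * k + 4), spider (Fin 3) (k + 1),
    pathGraph_isTree _, spider_isTree, by simpa using hk, by simp; omega, ?_⟩
  rintro X _ U ⟨⟨ψ, hψ, hψT, -⟩, ⟨φ, hφ, hφT, -⟩⟩ hminimum hU
  have hle := hminimum _ inferInstance _ (tadpole_isKIsoUniversalPair k)
  have hge := add_le_card_of_isTree hU ψ hψ hψT φ hφ hφT
  simp only [Nat.card_eq_fintype_card, Fintype.card_fin] at hle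
  omega
end
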